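/- The point stabilizer of (1:-ξ^a:0:0:0) in H = ⟨g1,g2⟩ ≅ Z/5 × Z/5 is the cyclic subgroup of order 5 generated by g1·g2^{-1}. -/

import Mathlib

open Matrix

/-- `ξ = e^{2πi/5}`. -/
noncomputable def ξ : ℂ := Complex.exp (2 * Real.pi * Complex.I / 5)

lemma ξ_ne_zero : ξ ≠ 0 := Complex.exp_ne_zero _

/-- `g₁ = diag(1, ξ, ξ², ξ³, ξ⁴)` as an element of `GL(5, ℂ)`. -/
noncomputable def g1GL : GL (Fin 5) ℂ :=
  Matrix.GeneralLinearGroup.mkOfDetNeZero (Matrix.diagonal fun i => ξ ^ (i : ℕ))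
    (by
      rw [Matrix.det_diagonal]
      exact Finset.prod_ne_zero_iff.mpr fun i _ => pow_ne_zero _ ξ_ne_zero)

/-- `g₂ = diag(1, ξ, ξ³, ξ, 1)` as an element of `GL(5, ℂ)`. -/
noncomputable def g2GL : GL (Fin 5) ℂ :=
  Matrix.GeneralLinearGroup.mkOfDetNeZero (Matrix.diagonal fun i => ξ ^ (![0, 1, 3, 1, 0] i : ℕ))
    (by
      rw [Matrix.det_diagonal]
      exact Finset.prod_ne_zero_iff.mpr fun i _ => pow_ne_zero _ ξ_ne_zero)

/-- The group `H = ⟨g₁, g₂⟩ ≅ ℤ/5 × ℤ/5`.  (The only scalar matrix in `H` is the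
identity, so this copy of `H` in `GL(5, ℂ)` is isomorphic to its image in `PGL(5, ℂ)`.) -/
noncomputable def H : Subgroup (GL (Fin 5) ℂ) := Subgroup.closure {g1GL, g2GL}

/-- The point `(1 : -ξ^a : 0 : 0 : 0)` of `ℂP⁴`, as a homogeneous coordinate vector. -/
noncomputable def pt (a : Fin 5) : Fin 5 → ℂ := ![1, -ξ ^ (a : ℕ), 0, 0, 0]

/-! Everything in sight is diagonal. An element `g₁^m g₂^n` of `H` multiplies the two nonzero
coordinates of `(1 : -ξ^a : 0 : 0 : 0)` by `1` and `ξ^(m+n)`, so it fixes the point exactly when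
`5 ∣ m + n`, and then `g₁^m g₂^n = (g₁g₂⁻¹)^m` because `g₂⁵ = 1`. -/

theorem Subgroup.exists_pow_mul_pow_of_mem_closure_pair {G : Type*} [Group G] {x y z : G}
    (hxy : Commute x y) (hx : IsOfFinOrder x) (hy : IsOfFinOrder y)
    (hz : z ∈ Subgroup.closure {x, y}) : ∃ m n : ℕ, x ^ m * y ^ n = z := by
  replace hz : z ∈ Submonoid.closure {x, y} := by
    rwa [← Subgroup.closure_toSubmonoid_of_isOfFinOrder (by simp [hx, hy])]
  induction hz using Submonoid.closure_induction with
  | mem w hw =>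
    rcases hw with rfl | rfl
    · exact ⟨1, 0, by simp⟩
    · exact ⟨0, 1, by simp⟩
  | one => exact ⟨0, 0, by simp⟩
  | mul u v _ _ ihu ihv =>
    obtain ⟨m, n, rfl⟩ := ihu
    obtain ⟨m', n', rfl⟩ := ihv
    refine ⟨m + m', n + n', ?_⟩
    rw [pow_add, pow_add, (hxy.pow_pow m' n).symm.mul_mul_mul_comm]

theorem Commute.pow_mul_pow_mem_zpowers_mul_inv {G : Type*} [Group G] {x y : G}
    (hxy : Commute x y) {m n : ℕ} (hy : y ^ (m + n) = 1) :
    x ^ m * y ^ n ∈ Subgroup.zpowers (x * y⁻¹) := by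
  rw [Subgroup.mem_zpowers_iff]
  refine ⟨m, ?_⟩
  rw [zpow_natCast, hxy.inv_right.mul_pow, inv_pow,
    ← eq_inv_of_mul_eq_one_right (by rwa [← pow_add])]

theorem Matrix.diagonal_mulVec_mem_span_singleton_iff {n R : Type*} [Fintype n] [DecidableEq n]
    [CommRing R] [NoZeroDivisors R] (d v : n → R) :
    diagonal d *ᵥ v ∈ Submodule.span R {v} ↔ ∃ c, ∀ i, v i ≠ 0 → d i = c := by
  simp only [Submodule.mem_span_singleton, funext_iff, mulVec_diagonal, Pi.smul_apply,
    smul_eq_mul]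
  refine exists_congr fun c => forall_congr' fun i => ?_
  rw [eq_comm, mul_eq_mul_right_iff]
  tauto

lemma diagonal_mulVec_pt_mem_span_iff (a : Fin 5) (d : Fin 5 → ℂ) :
    diagonal d *ᵥ pt a ∈ Submodule.span ℂ {pt a} ↔ d 0 = d 1 := by
  rw [diagonal_mulVec_mem_span_singleton_iff]
  constructor
  · rintro ⟨c, hc⟩
    rw [hc 0 (by simp [pt]), hc 1 (by simp [pt, ξ_ne_zero])]
  · intro h
    refine ⟨d 0, fun i hi => ?_⟩
    fin_cases i <;> simp_all [pt]

lemma ξ_isPrimitiveRoot : IsPrimitiveRoot ξ 5 := by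
  simpa [ξ] using Complex.isPrimitiveRoot_exp 5 (by norm_num)

lemma coe_g1GL_pow_mul_g2GL_pow (m n : ℕ) :
    ((g1GL ^ m * g2GL ^ n : GL (Fin 5) ℂ) : Matrix (Fin 5) (Fin 5) ℂ) =
      diagonal fun i : Fin 5 => ξ ^ ((i : ℕ) * m + (![0, 1, 3, 1, 0] i : ℕ) * n) := by
  rw [Units.val_mul, Units.val_pow_eq_pow_val, Units.val_pow_eq_pow_val]
  simp only [g1GL, g2GL, Matrix.GeneralLinearGroup.val_mkOfDetNeZero, diagonal_pow,
    diagonal_mul_diagonal]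
  congr 1
  funext i
  simp only [Pi.pow_apply, pow_add, pow_mul]

lemma g1GL_pow_mul_g2GL_pow_eq_one_iff (m n : ℕ) :
    g1GL ^ m * g2GL ^ n = 1 ↔ ∀ i : Fin 5, 5 ∣ (i : ℕ) * m + (![0, 1, 3, 1, 0] i : ℕ) * n := by
  rw [Units.ext_iff, coe_g1GL_pow_mul_g2GL_pow, Units.val_one, ← diagonal_one,
    diagonal_eq_diagonal_iff]
  simp only [ξ_isPrimitiveRoot.pow_eq_one_iff_dvd]

lemma g1GL_pow_five : g1GL ^ 5 = 1 := by
  simpa using (g1GL_pow_mul_g2GL_pow_eq_one_iff 5 0).2 (by decide)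

lemma g2GL_pow_five : g2GL ^ 5 = 1 := by
  simpa using (g1GL_pow_mul_g2GL_pow_eq_one_iff 0 5).2 (by decide)

lemma commute_g1GL_g2GL : Commute g1GL g2GL := by
  ext : 1
  simp only [Units.val_mul, g1GL, g2GL, Matrix.GeneralLinearGroup.val_mkOfDetNeZero,
    diagonal_mul_diagonal, mul_comm]

lemma g1GL_mul_g2GL_inv_pow (j : ℕ) : (g1GL * g2GL⁻¹) ^ j = g1GL ^ j * g2GL ^ (4 * j) := by
  have hinv : g2GL⁻¹ = g2GL ^ 4 := inv_eq_of_mul_eq_one_left (by rw [← pow_succ, g2GL_pow_five])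
  rw [hinv, commute_g1GL_g2GL.pow_right 4 |>.mul_pow, ← pow_mul, mul_comm]

lemma orderOf_g1GL_mul_g2GL_inv : orderOf (g1GL * g2GL⁻¹) = 5 := by
  have : Fact (Nat.Prime 5) := ⟨by norm_num⟩
  refine orderOf_eq_prime ?_ ?_
  · rw [g1GL_mul_g2GL_inv_pow, g1GL_pow_mul_g2GL_pow_eq_one_iff]
    decide
  · rw [← pow_one (g1GL * g2GL⁻¹), g1GL_mul_g2GL_inv_pow, Ne, g1GL_pow_mul_g2GL_pow_eq_one_iff]
    -- the (2,2) entry of `g₁g₂⁻¹` is `ξ¹⁴ ≠ 1`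
    exact fun h => absurd (h 2) (by decide)

lemma g1GL_pow_mul_g2GL_pow_mulVec_pt_mem_span_iff (a : Fin 5) (m n : ℕ) :
    ((g1GL ^ m * g2GL ^ n : GL (Fin 5) ℂ) : Matrix (Fin 5) (Fin 5) ℂ) *ᵥ pt a ∈
      Submodule.span ℂ {pt a} ↔ 5 ∣ m + n := by
  rw [coe_g1GL_pow_mul_g2GL_pow, diagonal_mulVec_pt_mem_span_iff, eq_comm]
  simpa using ξ_isPrimitiveRoot.pow_eq_one_iff_dvd (m + n)

/-- The stabilizer in `H = ⟨g₁, g₂⟩ ≅ ℤ/5 × ℤ/5` of the projective point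
`(1 : -ξ^a : 0 : 0 : 0)` (i.e. those `h ∈ H` taking the homogeneous coordinate vector to
a scalar multiple of itself) is the cyclic subgroup of order 5 generated by `g₁·g₂⁻¹`. -/
theorem stabilizer_eq_cyclic (a : Fin 5) :
    (∀ h ∈ H, ((h : Matrix (Fin 5) (Fin 5) ℂ).mulVec (pt a) ∈
        Submodule.span ℂ ({pt a} : Set (Fin 5 → ℂ)) ↔ h ∈ Subgroup.closure {g1GL * g2GL⁻¹})) ∧
    IsCyclic (Subgroup.closure {g1GL * g2GL⁻¹} : Subgroup (GL (Fin 5) ℂ)) ∧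
    Nat.card (Subgroup.closure {g1GL * g2GL⁻¹} : Subgroup (GL (Fin 5) ℂ)) = 5 := by
  have hk : IsOfFinOrder (g1GL * g2GL⁻¹) := orderOf_pos_iff.1 (by
    rw [orderOf_g1GL_mul_g2GL_inv]; norm_num)
  rw [← Subgroup.zpowers_eq_closure, Nat.card_zpowers, orderOf_g1GL_mul_g2GL_inv]
  refine ⟨fun h hh => ⟨fun hstab => ?_, fun hK => ?_⟩, inferInstance, rfl⟩
  · obtain ⟨m, n, rfl⟩ := Subgroup.exists_pow_mul_pow_of_mem_closure_pair commute_g1GL_g2GL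
      (isOfFinOrder_iff_pow_eq_one.2 ⟨5, by norm_num, g1GL_pow_five⟩)
      (isOfFinOrder_iff_pow_eq_one.2 ⟨5, by norm_num, g2GL_pow_five⟩) hh
    obtain ⟨t, ht⟩ := (g1GL_pow_mul_g2GL_pow_mulVec_pt_mem_span_iff a m n).1 hstab
    exact commute_g1GL_g2GL.pow_mul_pow_mem_zpowers_mul_inv (by
      rw [ht, pow_mul, g2GL_pow_five, one_pow])
  · obtain ⟨j, rfl⟩ := Submonoid.mem_powers_iff _ _ |>.1 (hk.mem_powers_iff_mem_zpowers.2 hK)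
    rw [g1GL_mul_g2GL_inv_pow, g1GL_pow_mul_g2GL_pow_mulVec_pt_mem_span_iff]
    omega
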